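/- Correctness of the split program (Lemma 3 of the paper): let P ⊆ ℙ be finite and let M = ⟨R,W,V⟩, M₁ = ⟨R₁,W₁,V₁⟩, M₂ = ⟨R₂,W₂,V₂⟩ be models whose components are all subsets of P (i.e. M∩P = M, M₁∩P = M₁, M₂∩P = M₂). Then M ◁ (M₁,M₂) if and only if M⟦split(P)⟧M', where M' := ⟨R ∪ {p¹ : p∈R₁} ∪ {p² : p∈R₂}, W ∪ {p¹ : p∈W₁} ∪ {p² : p∈W₂}, V ∪ {p¹ : p∈V₁} ∪ {p² : p∈V₂}⟩. -/

import Mathlib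

set_option maxHeartbeats 1000000

/-- Propositional variables. -/
abbrev PVar := ℕ

/-- A DL-PA∥ model: readable variables `R`, writable variables `W`,
valuation `V`, with writability implying readability. -/
@[ext]
structure Model where
  R : Set PVar
  W : Set PVar
  V : Set PVar
  sub : W ⊆ R

mutual
/-- Formulas of DL-PA∥. -/
inductive Formula : Type where
  | atom : PVar → Formula
  | top  : Formula
  | neg  : Formula → Formula
  | or   : Formula → Formula → Formula
  | dia  : Program → Formula → Formula
/-- Programs of DL-PA∥. -/
inductive Program : Type where
  | assignT : PVar → Program   -- +p
  | assignF : PVar → Program   -- −p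
  | addR : PVar → Program      -- +r p
  | remR : PVar → Program      -- −r p
  | addW : PVar → Program      -- +w p
  | remW : PVar → Program      -- −w p
  | testEx : Formula → Program -- exogenous test φ?
  | testEn : Formula → Program -- endogenous test φ?ⁿ
  | seq : Program → Program → Program
  | choice : Program → Program → Program
  | star : Program → Program
  | par : Program → Program → Program
end

/-- RW-disjointness. -/
def RWdisjoint (M1 M2 : Model) : Prop :=
  M1.W ∩ M2.R = ∅ ∧ M2.W ∩ M1.R = ∅

/-- Split relation `M ◁ (M₁,M₂)`. -/
def SplitRel (M M1 M2 : Model) : Prop :=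
  RWdisjoint M1 M2 ∧ M.R = M1.R ∪ M2.R ∧ M.W = M1.W ∪ M2.W ∧ M.V = M1.V ∧ M.V = M2.V

/-- Merge relation `M ▷ (M₁,M₂)`. -/
def MergeRel (M M1 M2 : Model) : Prop :=
  RWdisjoint M1 M2 ∧ M.R = M1.R ∪ M2.R ∧ M.W = M1.W ∪ M2.W ∧
  M1.V \ M.W = M2.V \ M.W ∧ M.V = (M1.V ∩ M1.W) ∪ (M2.V ∩ M2.W) ∪ (M1.V ∩ M2.V)

/-- Indistinguishability `M ∼ M'`. -/
def Indist (M M' : Model) : Prop :=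
  M.R = M'.R ∧ M.W = M'.W ∧ M.V ∩ M.R = M'.V ∩ M'.R

mutual
/-- Truth of a formula in a model. -/
def Sat : Model → Formula → Prop
  | M, .atom p => p ∈ M.V
  | _, .top => True
  | M, .neg φ => ¬ Sat M φ
  | M, .or φ ψ => Sat M φ ∨ Sat M ψ
  | M, .dia π φ => ∃ M', Interp π M M' ∧ Sat M' φ
/-- Interpretation of programs as relations between models. -/
def Interp : Program → Model → Model → Prop
  | .assignT p, M, M' => M'.R = M.R ∧ M'.W = M.W ∧ M'.V = M.V ∪ {p} ∧ p ∈ M.W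
  | .assignF p, M, M' => M'.R = M.R ∧ M'.W = M.W ∧ M'.V = M.V \ {p} ∧ p ∈ M.W
  | .addR p, M, M' => M'.R = M.R ∪ {p} ∧ M'.W = M.W ∧ M'.V = M.V
  | .remR p, M, M' => M'.R = M.R \ {p} ∧ M'.W = M.W \ {p} ∧ M'.V = M.V
  | .addW p, M, M' => M'.R = M.R ∪ {p} ∧ M'.W = M.W ∪ {p} ∧ M'.V = M.V
  | .remW p, M, M' => M'.R = M.R ∧ M'.W = M.W \ {p} ∧ M'.V = M.V
  | .testEx φ, M, M' => M = M' ∧ Sat M φ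
  | .testEn φ, M, M' => M = M' ∧ ∀ M'', Indist M'' M → Sat M'' φ
  | .seq π1 π2, M, M' => ∃ M'', Interp π1 M M'' ∧ Interp π2 M'' M'
  | .choice π1 π2, M, M' => Interp π1 M M' ∨ Interp π2 M M'
  | .star π, M, M' => Relation.ReflTransGen (fun A B => Interp π A B) M M'
  | .par π1 π2, M, M' => ∃ M1 M2 M1' M2',
      SplitRel M M1 M2 ∧ MergeRel M' M1' M2' ∧
      Interp π1 M1 M1' ∧ Interp π2 M2 M2' ∧
      M1.R = M1'.R ∧ M1.W = M1'.W ∧ M1.V \ M1.W = M1'.V \ M1'.W ∧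
      M2.R = M2'.R ∧ M2.W = M2'.W ∧ M2.V \ M2.W = M2'.V \ M2'.W
end

mutual
/-- Propositional variables occurring in a formula. -/
def varsF : Formula → Finset PVar
  | .atom p => {p}
  | .top => ∅
  | .neg φ => varsF φ
  | .or φ ψ => varsF φ ∪ varsF ψ
  | .dia π φ => varsP π ∪ varsF φ
/-- Propositional variables occurring in a program. -/
def varsP : Program → Finset PVar
  | .assignT p => {p}
  | .assignF p => {p}
  | .addR p => {p}
  | .remR p => {p}
  | .addW p => {p}
  | .remW p => {p}
  | .testEx φ => varsF φ
  | .testEn φ => varsF φ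
  | .seq π1 π2 => varsP π1 ∪ varsP π2
  | .choice π1 π2 => varsP π1 ∪ varsP π2
  | .star π => varsP π
  | .par π1 π2 => varsP π1 ∪ varsP π2
end

/-- `⊥`. -/
def botF : Formula := .neg .top
/-- Conjunction. -/
def andF (φ ψ : Formula) : Formula := .neg (.or (.neg φ) (.neg ψ))
/-- Implication. -/
def impF (φ ψ : Formula) : Formula := .or (.neg φ) ψ
/-- Bi-implication. -/
def iffF (φ ψ : Formula) : Formula := andF (impF φ ψ) (impF ψ φ)
/-- `[π]φ`. -/
def boxF (π : Program) (φ : Formula) : Formula := .neg (.dia π (.neg φ))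
/-- `w(p)`: `p` is writable. -/
def wF (p : PVar) : Formula := .dia (.assignT p) .top
/-- `r(p)`: `p` is readable. -/
def rF (p : PVar) : Formula :=
  .or (.dia (.testEn (.atom p)) .top) (.dia (.testEn (.neg (.atom p))) .top)

/-- Restriction `M ∩ P` of a model to a set of variables. -/
def interModel (M : Model) (P : Set PVar) : Model :=
  ⟨M.R ∩ P, M.W ∩ P, M.V ∩ P, Set.inter_subset_inter M.sub (subset_refl P)⟩

/-- A formula is valid iff true in every model. -/
def Valid (φ : Formula) : Prop := ∀ M : Model, Sat M φ
/-- Sequential composition of a list of programs (`⊤?` for the empty list). -/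
def seqL : List Program → Program
  | [] => .testEx .top
  | [π] => π
  | π :: rest => .seq π (seqL rest)

/-- Sequential composition `;_{p∈P} g(p)` over a finite set of variables,
in increasing order of the variables. -/
def seqOver (P : Finset PVar) (g : PVar → Program) : Program :=
  seqL ((P.sort (· ≤ ·)).map g)

/-- Conjunction of a list of formulas (`⊤` for the empty list). -/
def conjL : List Formula → Formula
  | [] => .top
  | [φ] => φ
  | φ :: rest => andF φ (conjL rest)

/-- Conjunction `⋀_{p∈P} g(p)` over a finite set of variables. -/
def conjOver (P : Finset PVar) (g : PVar → Formula) : Formula :=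
  conjL ((P.sort (· ≤ ·)).map g)

mutual
/-- Renaming of the variables of a formula. -/
def renameF (σ : PVar → PVar) : Formula → Formula
  | .atom p => .atom (σ p)
  | .top => .top
  | .neg φ => .neg (renameF σ φ)
  | .or φ ψ => .or (renameF σ φ) (renameF σ ψ)
  | .dia π φ => .dia (renameP σ π) (renameF σ φ)
/-- Renaming of the variables of a program. -/
def renameP (σ : PVar → PVar) : Program → Program
  | .assignT p => .assignT (σ p)
  | .assignF p => .assignF (σ p)
  | .addR p => .addR (σ p)
  | .remR p => .remR (σ p)
  | .addW p => .addW (σ p)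
  | .remW p => .remW (σ p)
  | .testEx φ => .testEx (renameF σ φ)
  | .testEn φ => .testEn (renameF σ φ)
  | .seq π1 π2 => .seq (renameP σ π1) (renameP σ π2)
  | .choice π1 π2 => .choice (renameP σ π1) (renameP σ π2)
  | .star π => .star (renameP σ π)
  | .par π1 π2 => .par (renameP σ π1) (renameP σ π2)
end

/- A copy/store variable scheme is a function `f : Fin 6 → PVar → PVar`:
`f 0 p = p¹`, `f 1 p = p²` (copy variables),
`f 2 p = pʳ¹`, `f 3 p = pʳ²`, `f 4 p = pʷ¹`, `f 5 p = pʷ²` (store variables). -/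

/-- The set `S(P)` of store variables associated with `P`. -/
def storeSet (f : Fin 6 → PVar → PVar) (P : Finset PVar) : Set PVar :=
  (f 2 '' ↑P) ∪ (f 3 '' ↑P) ∪ (f 4 '' ↑P) ∪ (f 5 '' ↑P)

/-- The part of `split(P)` dealing with variable `p`. -/
def splitP1 (f : Fin 6 → PVar → PVar) (p : PVar) : Program :=
  seqL [ .addW (f 0 p), .addW (f 1 p),
    .choice (seqL [.testEx (.atom p), .assignT (f 0 p), .assignT (f 1 p)])
            (seqL [.testEx (.neg (.atom p)), .assignF (f 0 p), .assignF (f 1 p)]),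
    .remR (f 0 p), .remR (f 1 p),
    .choice (.testEx (.neg (rF p)))
      (.choice
        (.seq (.testEx (wF p)) (.choice (.addW (f 0 p)) (.addW (f 1 p))))
        (.seq (.testEx (andF (.neg (wF p)) (rF p)))
          (.choice (.addR (f 0 p))
            (.choice (.addR (f 1 p)) (.seq (.addR (f 0 p)) (.addR (f 1 p))))))) ]

/-- The program `split(P)`. -/
def splitProg (f : Fin 6 → PVar → PVar) (P : Finset PVar) : Program :=
  seqOver P (splitP1 f)

/-- The part of `store(P)` dealing with variable `p` and index `k`
(`c`, `r`, `w` are the indices of `pᵏ`, `pʳᵏ`, `pʷᵏ` in the scheme). -/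
def storeK (f : Fin 6 → PVar → PVar) (c r w : Fin 6) (p : PVar) : Program :=
  seqL [ .addW (f r p), .addW (f w p),
    .choice (.seq (.testEx (rF (f c p))) (.assignT (f r p)))
            (.seq (.testEx (.neg (rF (f c p)))) (.assignF (f r p))),
    .choice (.seq (.testEx (wF (f c p))) (.assignT (f w p)))
            (.seq (.testEx (.neg (wF (f c p)))) (.assignF (f w p))) ]

/-- The program `store(P)`. -/
def storeProg (f : Fin 6 → PVar → PVar) (P : Finset PVar) : Program :=
  seqOver P (fun p => .seq (storeK f 0 2 4 p) (storeK f 1 3 5 p))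

/-- The part of `check(P)` dealing with variable `p` and index `k`. -/
def checkK (f : Fin 6 → PVar → PVar) (c r w : Fin 6) (p : PVar) : Formula :=
  andF (iffF (.atom (f r p)) (rF (f c p)))
    (andF (iffF (.atom (f w p)) (wF (f c p)))
      (impF (.neg (.atom (f w p))) (iffF (.atom p) (.atom (f c p)))))

/-- The formula `check(P)`. -/
def checkFml (f : Fin 6 → PVar → PVar) (P : Finset PVar) : Formula :=
  conjOver P (fun p => andF (checkK f 0 2 4 p) (checkK f 1 3 5 p))

/-- The cleaning part of `merge(P)` dealing with variable `p` and index `k`. -/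
def mergeK (f : Fin 6 → PVar → PVar) (c r w : Fin 6) (p : PVar) : Program :=
  seqL [ .assignF (f r p), .assignF (f w p), .addW (f c p), .assignF (f c p),
         .remR (f r p), .remR (f w p), .remR (f c p) ]

/-- The part of `merge(P)` dealing with variable `p`. -/
def mergeP1 (f : Fin 6 → PVar → PVar) (p : PVar) : Program :=
  .seq
    (.choice (.testEx (.neg (wF p)))
      (.choice
        (.seq (.testEx (.or (andF (wF (f 0 p)) (.atom (f 0 p)))
                            (andF (wF (f 1 p)) (.atom (f 1 p)))))
              (.assignT p))
        (.seq (.testEx (.or (andF (wF (f 0 p)) (.neg (.atom (f 0 p))))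
                            (andF (wF (f 1 p)) (.neg (.atom (f 1 p))))))
              (.assignF p))))
    (.seq (mergeK f 0 2 4 p) (mergeK f 1 3 5 p))

/-- The program `merge(P)`. -/
def mergeProg (f : Fin 6 → PVar → PVar) (P : Finset PVar) : Program :=
  seqOver P (mergeP1 f)

/-- The program `flatten(π₁,π₂)`. -/
def flattenProg (f : Fin 6 → PVar → PVar) (π1 π2 : Program) : Program :=
  let P := varsP (.par π1 π2)
  seqL [ splitProg f P, storeProg f P, renameP (f 0) π1, renameP (f 1) π2,
         .testEx (checkFml f P), mergeProg f P ]

/-- The program `;_{p∈P}( r(p)? ⊔ (¬r(p)? ; (+p ⊔ −p)) )` used in the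
reduction axiom for endogenous tests. -/
def readProg (P : Finset PVar) : Program :=
  seqOver P (fun p =>
    .choice (.testEx (rF p))
      (.seq (.testEx (.neg (rF p))) (.choice (.assignT p) (.assignF p))))

/-- `π^{≤n}`. -/
def iterLe (π : Program) : ℕ → Program
  | 0 => .testEx .top
  | n+1 => .choice (.testEx .top) (.seq π (iterLe π n))

/-- The model `⟨R ∪ g₁[R₁] ∪ g₂[R₂], W ∪ g₁[W₁] ∪ g₂[W₂], V ∪ g₁[V₁] ∪ g₂[V₂]⟩`. -/
def extModel (M : Model) (g1 g2 : PVar → PVar) (M1 M2 : Model) : Model :=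
  ⟨M.R ∪ g1 '' M1.R ∪ g2 '' M2.R,
   M.W ∪ g1 '' M1.W ∪ g2 '' M2.W,
   M.V ∪ g1 '' M1.V ∪ g2 '' M2.V,
   Set.union_subset_union
     (Set.union_subset_union M.sub (Set.image_mono M1.sub))
     (Set.image_mono M2.sub)⟩
lemma interp_addW_iff (A B : Model) (p : PVar) : Interp (.addW p) A B ↔ (B.R = A.R ∪ {p} ∧ B.W = A.W ∪ {p} ∧ B.V = A.V) := by
  simp [Interp]

lemma sat_wF (A : Model) (p : PVar) : Sat A (wF p) ↔ p ∈ A.W := by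
  constructor
  · rintro ⟨M', ⟨-, -, -, h⟩, -⟩; exact h
  · intro h
    exact ⟨⟨A.R, A.W, A.V ∪ {p}, A.sub⟩, ⟨rfl, rfl, rfl, h⟩, trivial⟩

lemma sat_rF (A : Model) (p : PVar) : Sat A (rF p) ↔ p ∈ A.R := by
  constructor
  · rintro (⟨M', ⟨rfl, h⟩, -⟩ | ⟨M', ⟨rfl, h⟩, -⟩) <;> by_contra hp
    · have := h ⟨A.R, A.W, A.V \ {p}, A.sub⟩ ?_
      · simp [Sat] at this
      · refine ⟨rfl, rfl, ?_⟩
        ext x; simp; intro hx hv he; exact hp (he ▸ hx)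
    · have := h ⟨A.R, A.W, A.V ∪ {p}, A.sub⟩ ?_
      · simp [Sat] at this
      · refine ⟨rfl, rfl, ?_⟩
        ext x; simp; intro hx he; exact absurd (he ▸ hx) hp
  · intro h
    by_cases hv : p ∈ A.V
    · exact Or.inl ⟨A, ⟨rfl, fun M'' ⟨hR, hW, hV⟩ => by
        have : p ∈ M''.V ∩ M''.R := hV ▸ ⟨hv, h⟩
        exact this.1⟩, trivial⟩
    · exact Or.inr ⟨A, ⟨rfl, fun M'' ⟨hR, hW, hV⟩ => by
        simp only [Sat]
        intro hc
        have : p ∈ M''.V ∩ M''.R := ⟨hc, hR ▸ h⟩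
        rw [hV] at this
        exact hv this.1⟩, trivial⟩
lemma interp_seqL_cons (π : Program) (l : List Program) (A B : Model) :
    Interp (seqL (π :: l)) A B ↔ ∃ C, Interp π A C ∧ Interp (seqL l) C B := by
  cases l with
  | nil =>
    simp [seqL, Interp, Sat]
  | cons b l => rfl

section SetHelpers
variable {a b : PVar} {s : Set PVar}

lemma hrem2 (ha : a ∉ s) (hb : b ∉ s) : ((s ∪ {a} ∪ {b}) \ {a}) \ {b} = s := by
  ext x
  simp only [Set.mem_diff, Set.mem_union, Set.mem_singleton_iff]
  constructor
  · rintro ⟨⟨(h | rfl) | rfl, h1⟩, h2⟩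
    · exact h
    · exact absurd rfl h1
    · exact absurd rfl h2
  · intro h
    exact ⟨⟨Or.inl (Or.inl h), fun he => ha (he ▸ h)⟩, fun he => hb (he ▸ h)⟩

lemma hrem1 (ha : a ∉ s) (hab : a ≠ b) : (s ∪ {a} ∪ {b}) \ {a} = s ∪ {b} := by
  ext x
  simp only [Set.mem_diff, Set.mem_union, Set.mem_singleton_iff]
  constructor
  · rintro ⟨(h | rfl) | rfl, h1⟩
    · exact Or.inl h
    · exact absurd rfl h1
    · exact Or.inr rfl
  · rintro (h | rfl)
    · exact ⟨Or.inl (Or.inl h), fun he => ha (he ▸ h)⟩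
    · exact ⟨Or.inr rfl, fun he => hab he.symm⟩

lemma hrem0 (hb : b ∉ s) : (s ∪ {b}) \ {b} = s := by
  ext x
  simp only [Set.mem_diff, Set.mem_union, Set.mem_singleton_iff]
  constructor
  · rintro ⟨h | rfl, h1⟩
    · exact h
    · exact absurd rfl h1
  · intro h
    exact ⟨Or.inl h, fun he => hb (he ▸ h)⟩

lemma hdiff2 (ha : a ∉ s) (hb : b ∉ s) : (s \ {a}) \ {b} = s := by
  rw [Set.diff_singleton_eq_self ha, Set.diff_singleton_eq_self hb]

lemma inter_cons (p : PVar) (L : List PVar) (s : Set PVar) :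
    s ∩ {x | x ∈ (p::L)} = (s ∩ {x | x ∈ L}) ∪ ({p} ∩ s) := by
  ext x
  simp only [Set.mem_inter_iff, Set.mem_setOf_eq, List.mem_cons, Set.mem_union,
    Set.mem_singleton_iff]
  tauto

lemma set_split (p : PVar) (s : Set PVar) : s = (s \ {p}) ∪ ({p} ∩ s) := by
  ext x
  simp only [Set.mem_union, Set.mem_diff, Set.mem_singleton_iff, Set.mem_inter_iff]
  tauto

lemma union_singleton_inter_list (L : List PVar) (ha : a ∉ {x : PVar | x ∈ L}) :
    (s ∪ {a}) ∩ {x | x ∈ L} = s ∩ {x | x ∈ L} := by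
  ext x
  simp only [Set.mem_inter_iff, Set.mem_union, Set.mem_singleton_iff, Set.mem_setOf_eq]
  constructor
  · rintro ⟨h | rfl, hl⟩
    · exact ⟨h, hl⟩
    · exact absurd hl ha
  · rintro ⟨h, hl⟩
    exact ⟨Or.inl h, hl⟩
end SetHelpers
lemma sat_atom (A : Model) (p : PVar) : Sat A (.atom p) ↔ p ∈ A.V := Iff.rfl
lemma sat_neg (A : Model) (φ : Formula) : Sat A (.neg φ) ↔ ¬ Sat A φ := Iff.rfl
lemma sat_or (A : Model) (φ ψ : Formula) : Sat A (.or φ ψ) ↔ Sat A φ ∨ Sat A ψ := Iff.rfl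

lemma sat_neg_atom (A : Model) (p : PVar) : Sat A (.neg (.atom p)) ↔ p ∉ A.V := Iff.rfl
lemma sat_neg_rF (A : Model) (p : PVar) : Sat A (.neg (rF p)) ↔ p ∉ A.R := by
  rw [sat_neg, sat_rF]
lemma sat_andF_wr (A : Model) (p : PVar) :
    Sat A (andF (.neg (wF p)) (rF p)) ↔ p ∉ A.W ∧ p ∈ A.R := by
  simp only [andF, sat_neg, sat_or, sat_wF, sat_rF, not_or, not_not]

lemma splitP1_iff (f : Fin 6 → PVar → PVar) (p : PVar) (A B : Model)
    (h1R : f 0 p ∉ A.R) (h1V : f 0 p ∉ A.V) (h2R : f 1 p ∉ A.R) (h2V : f 1 p ∉ A.V)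
    (h1p : f 0 p ≠ p) (h2p : f 1 p ≠ p) (h12 : f 0 p ≠ f 1 p) :
    Interp (splitP1 f p) A B ↔
      ((p ∈ A.V ∧ B.V = A.V ∪ {f 0 p} ∪ {f 1 p}) ∨ (p ∉ A.V ∧ B.V = A.V)) ∧
      ((p ∉ A.R ∧ B.R = A.R ∧ B.W = A.W) ∨
       (p ∈ A.W ∧ B.R = A.R ∪ {f 0 p} ∧ B.W = A.W ∪ {f 0 p}) ∨
       (p ∈ A.W ∧ B.R = A.R ∪ {f 1 p} ∧ B.W = A.W ∪ {f 1 p}) ∨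
       (p ∈ A.R ∧ p ∉ A.W ∧ B.R = A.R ∪ {f 0 p} ∧ B.W = A.W) ∨
       (p ∈ A.R ∧ p ∉ A.W ∧ B.R = A.R ∪ {f 1 p} ∧ B.W = A.W) ∨
       (p ∈ A.R ∧ p ∉ A.W ∧ B.R = A.R ∪ {f 0 p} ∪ {f 1 p} ∧ B.W = A.W)) := by
  have h1W : f 0 p ∉ A.W := fun hx => h1R (A.sub hx)
  have h2W : f 1 p ∉ A.W := fun hx => h2R (A.sub hx)
  constructor
  · intro h
    simp only [splitP1, seqL, Interp, sat_atom, sat_neg_atom, sat_neg_rF, sat_wF,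
      sat_andF_wr] at h
    obtain ⟨C1, ⟨hR1, hW1, hV1⟩, C2, ⟨hR2, hW2, hV2⟩, C3, hmid, C4, ⟨hR4, hW4, hV4⟩,
      C5, ⟨hR5, hW5, hV5⟩, hfin⟩ := h
    have hC2R : C2.R = A.R ∪ {f 0 p} ∪ {f 1 p} := by rw [hR2, hR1]
    have hC2W : C2.W = A.W ∪ {f 0 p} ∪ {f 1 p} := by rw [hW2, hW1]
    have hC2V : C2.V = A.V := hV2.trans hV1
    have hC3 : C3.R = C2.R ∧ C3.W = C2.W ∧
        ((p ∈ A.V ∧ C3.V = A.V ∪ {f 0 p} ∪ {f 1 p}) ∨ (p ∉ A.V ∧ C3.V = A.V)) := by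
      rcases hmid with ⟨D, ⟨hD, hp⟩, E, ⟨hER, hEW, hEV, _⟩, hCR, hCW, hCV, _⟩ |
        ⟨D, ⟨hD, hp⟩, E, ⟨hER, hEW, hEV, _⟩, hCR, hCW, hCV, _⟩
      · subst hD
        refine ⟨hCR.trans hER, hCW.trans hEW, Or.inl ⟨hC2V ▸ hp, ?_⟩⟩
        rw [hCV, hEV, hC2V]
      · subst hD
        refine ⟨hCR.trans hER, hCW.trans hEW, Or.inr ⟨hC2V ▸ hp, ?_⟩⟩
        rw [hCV, hEV, hC2V, hdiff2 h1V h2V]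
    have hC5R : C5.R = A.R := by
      rw [hR5, hR4, hC3.1, hC2R]; exact hrem2 h1R h2R
    have hC5W : C5.W = A.W := by
      rw [hW5, hW4, hC3.2.1, hC2W]; exact hrem2 h1W h2W
    have hC5V : C5.V = C3.V := hV5.trans hV4
    have hBV : B.V = C3.V := by
      rw [← hC5V]
      rcases hfin with ⟨hB, _⟩ | ⟨D, ⟨hD, _⟩, ⟨_, _, hv⟩ | ⟨_, _, hv⟩⟩ |
        ⟨D, ⟨hD, _, _⟩, ⟨_, _, hv⟩ | ⟨_, _, hv⟩ | ⟨E, ⟨_, _, hEv⟩, _, _, hv⟩⟩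
      · rw [← hB]
      · subst hD; exact hv
      · subst hD; exact hv
      · subst hD; exact hv
      · subst hD; exact hv
      · subst hD; rw [hv, hEv]
    refine ⟨?_, ?_⟩
    · rcases hC3.2.2 with ⟨hp, hv⟩ | ⟨hp, hv⟩
      · exact Or.inl ⟨hp, by rw [hBV, hv]⟩
      · exact Or.inr ⟨hp, by rw [hBV, hv]⟩
    · rcases hfin with ⟨hB, hpn⟩ | ⟨D, ⟨hD, hpw⟩, ⟨hr, hw, _⟩ | ⟨hr, hw, _⟩⟩ |
        ⟨D, ⟨hD, hpw, hpr⟩, ⟨hr, hw, _⟩ | ⟨hr, hw, _⟩ | ⟨E, ⟨hEr, hEw, _⟩, hr, hw, _⟩⟩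
      · exact Or.inl ⟨hC5R ▸ hpn, by rw [← hB, hC5R], by rw [← hB, hC5W]⟩
      · subst hD
        exact Or.inr (Or.inl ⟨hC5W ▸ hpw, by rw [hr, hC5R], by rw [hw, hC5W]⟩)
      · subst hD
        exact Or.inr (Or.inr (Or.inl ⟨hC5W ▸ hpw, by rw [hr, hC5R], by rw [hw, hC5W]⟩))
      · subst hD
        exact Or.inr (Or.inr (Or.inr (Or.inl
          ⟨hC5R ▸ hpr, hC5W ▸ hpw, by rw [hr, hC5R], by rw [hw, hC5W]⟩)))
      · subst hD
        exact Or.inr (Or.inr (Or.inr (Or.inr (Or.inl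
          ⟨hC5R ▸ hpr, hC5W ▸ hpw, by rw [hr, hC5R], by rw [hw, hC5W]⟩))))
      · subst hD
        exact Or.inr (Or.inr (Or.inr (Or.inr (Or.inr
          ⟨hC5R ▸ hpr, hC5W ▸ hpw, by rw [hr, hEr, hC5R], by rw [hw, hEw, hC5W]⟩))))
  · rintro ⟨hV, hRW⟩
    simp only [splitP1, seqL, Interp, sat_atom, sat_neg_atom, sat_neg_rF, sat_wF,
      sat_andF_wr]
    obtain ⟨hpV, hBV⟩ | ⟨hpV, hBV⟩ := hV
    all_goals {
      first
      | (refine ⟨⟨A.R ∪ {f 0 p}, A.W ∪ {f 0 p}, A.V,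
            Set.union_subset_union A.sub (subset_refl _)⟩, ⟨rfl, rfl, rfl⟩,
          ⟨A.R ∪ {f 0 p} ∪ {f 1 p}, A.W ∪ {f 0 p} ∪ {f 1 p}, A.V,
            Set.union_subset_union (Set.union_subset_union A.sub (subset_refl _)) (subset_refl _)⟩,
          ⟨rfl, rfl, rfl⟩,
          ⟨A.R ∪ {f 0 p} ∪ {f 1 p}, A.W ∪ {f 0 p} ∪ {f 1 p}, A.V ∪ {f 0 p} ∪ {f 1 p},
            Set.union_subset_union (Set.union_subset_union A.sub (subset_refl _)) (subset_refl _)⟩,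
          Or.inl ⟨_, ⟨rfl, hpV⟩,
            ⟨A.R ∪ {f 0 p} ∪ {f 1 p}, A.W ∪ {f 0 p} ∪ {f 1 p}, A.V ∪ {f 0 p},
              Set.union_subset_union (Set.union_subset_union A.sub (subset_refl _)) (subset_refl _)⟩,
            ⟨rfl, rfl, rfl, Or.inl (Or.inr rfl)⟩, rfl, rfl, rfl, Or.inr rfl⟩,
          ⟨A.R ∪ {f 1 p}, A.W ∪ {f 1 p}, A.V ∪ {f 0 p} ∪ {f 1 p},
            Set.union_subset_union A.sub (subset_refl _)⟩,
          ⟨(hrem1 h1R h12).symm, (hrem1 h1W h12).symm, rfl⟩,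
          ⟨A.R, A.W, A.V ∪ {f 0 p} ∪ {f 1 p}, A.sub⟩,
          ⟨(hrem0 h2R).symm, (hrem0 h2W).symm, rfl⟩, ?_⟩)
      | (refine ⟨⟨A.R ∪ {f 0 p}, A.W ∪ {f 0 p}, A.V,
            Set.union_subset_union A.sub (subset_refl _)⟩, ⟨rfl, rfl, rfl⟩,
          ⟨A.R ∪ {f 0 p} ∪ {f 1 p}, A.W ∪ {f 0 p} ∪ {f 1 p}, A.V,
            Set.union_subset_union (Set.union_subset_union A.sub (subset_refl _)) (subset_refl _)⟩,
          ⟨rfl, rfl, rfl⟩,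
          ⟨A.R ∪ {f 0 p} ∪ {f 1 p}, A.W ∪ {f 0 p} ∪ {f 1 p}, A.V,
            Set.union_subset_union (Set.union_subset_union A.sub (subset_refl _)) (subset_refl _)⟩,
          Or.inr ⟨_, ⟨rfl, hpV⟩,
            ⟨A.R ∪ {f 0 p} ∪ {f 1 p}, A.W ∪ {f 0 p} ∪ {f 1 p}, A.V \ {f 0 p},
              Set.union_subset_union (Set.union_subset_union A.sub (subset_refl _)) (subset_refl _)⟩,
            ⟨rfl, rfl, rfl, Or.inl (Or.inr rfl)⟩, rfl, rfl, (hdiff2 h1V h2V).symm, Or.inr rfl⟩,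
          ⟨A.R ∪ {f 1 p}, A.W ∪ {f 1 p}, A.V,
            Set.union_subset_union A.sub (subset_refl _)⟩,
          ⟨(hrem1 h1R h12).symm, (hrem1 h1W h12).symm, rfl⟩,
          ⟨A.R, A.W, A.V, A.sub⟩,
          ⟨(hrem0 h2R).symm, (hrem0 h2W).symm, rfl⟩, ?_⟩)
      rcases hRW with ⟨hpR, hBR, hBW⟩ | ⟨hpW, hBR, hBW⟩ | ⟨hpW, hBR, hBW⟩ |
        ⟨hpR, hpW, hBR, hBW⟩ | ⟨hpR, hpW, hBR, hBW⟩ | ⟨hpR, hpW, hBR, hBW⟩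
      · exact Or.inl ⟨Model.ext hBR.symm hBW.symm hBV.symm, hpR⟩
      · exact Or.inr (Or.inl ⟨_, ⟨rfl, hpW⟩, Or.inl ⟨hBR, hBW, hBV⟩⟩)
      · exact Or.inr (Or.inl ⟨_, ⟨rfl, hpW⟩, Or.inr ⟨hBR, hBW, hBV⟩⟩)
      · exact Or.inr (Or.inr ⟨_, ⟨rfl, hpW, hpR⟩, Or.inl ⟨hBR, hBW, hBV⟩⟩)
      · exact Or.inr (Or.inr ⟨_, ⟨rfl, hpW, hpR⟩, Or.inr (Or.inl ⟨hBR, hBW, hBV⟩)⟩)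
      · exact Or.inr (Or.inr ⟨_, ⟨rfl, hpW, hpR⟩, Or.inr (Or.inr
          ⟨⟨A.R ∪ {f 0 p}, A.W, _, A.sub.trans Set.subset_union_left⟩,
            ⟨rfl, rfl, rfl⟩, hBR, hBW, hBV⟩)⟩)
    }
set_option maxHeartbeats 8000000 in
lemma splitL_iff (f : Fin 6 → PVar → PVar) (P : Finset PVar)
    (hinj : ∀ i j : Fin 6, ∀ p ∈ P, ∀ q ∈ P, f i p = f j q → i = j ∧ p = q)
    (hfresh : ∀ i : Fin 6, ∀ p ∈ P, f i p ∉ P)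
    (L : List PVar) : L.Nodup → (∀ q ∈ L, q ∈ P) →
    ∀ A B : Model,
    (∀ q ∈ L, ∀ i : Fin 6, f i q ∉ A.R ∧ f i q ∉ A.V) →
    (Interp (seqL (L.map (splitP1 f))) A B ↔
      ∃ R1 W1 R2 W2 : Set PVar,
        W1 ⊆ R1 ∧ W2 ⊆ R2 ∧ R1 ⊆ {x | x ∈ L} ∧ R2 ⊆ {x | x ∈ L} ∧
        R1 ∪ R2 = A.R ∩ {x | x ∈ L} ∧ W1 ∪ W2 = A.W ∩ {x | x ∈ L} ∧
        W1 ∩ R2 = ∅ ∧ W2 ∩ R1 = ∅ ∧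
        B.R = A.R ∪ f 0 '' R1 ∪ f 1 '' R2 ∧
        B.W = A.W ∪ f 0 '' W1 ∪ f 1 '' W2 ∧
        B.V = A.V ∪ f 0 '' (A.V ∩ {x | x ∈ L}) ∪ f 1 '' (A.V ∩ {x | x ∈ L})) := by
  induction L with
  | nil =>
    intro _ _ A B _
    have hL : {x : PVar | x ∈ ([] : List PVar)} = (∅ : Set PVar) := by ext x; simp
    rw [List.map_nil]
    simp only [seqL, Interp]
    constructor
    · rintro ⟨rfl, -⟩
      refine ⟨∅, ∅, ∅, ∅, ?_, ?_, ?_, ?_, ?_, ?_, ?_, ?_, ?_, ?_, ?_⟩ <;> first | exact Set.empty_subset _ | simp [hL]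
    · rintro ⟨R1, W1, R2, W2, hw1, hw2, hR1, hR2, hRu, hWu, -, -, hBR, hBW, hBV⟩
      rw [hL] at hR1 hR2 hRu hWu hBV
      have e1 : R1 = ∅ := Set.subset_empty_iff.mp hR1
      have e2 : R2 = ∅ := Set.subset_empty_iff.mp hR2
      have e3 : W1 = ∅ := Set.subset_empty_iff.mp (e1 ▸ hw1)
      have e4 : W2 = ∅ := Set.subset_empty_iff.mp (e2 ▸ hw2)
      rw [e1, e2] at hBR
      rw [e3, e4] at hBW
      simp only [Set.image_empty, Set.union_empty, Set.inter_empty] at hBR hBW hBV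
      refine ⟨(Model.ext hBR hBW hBV).symm, trivial⟩
  | cons p L ih =>
    intro hnd hsub A B hA
    obtain ⟨hpL, hndL⟩ := List.nodup_cons.mp hnd
    have hpP : p ∈ P := hsub p (List.mem_cons_self)
    have hLP : ∀ q ∈ L, q ∈ P := fun q hq => hsub q (List.mem_cons_of_mem _ hq)
    have h1p : f 0 p ≠ p := fun he => hfresh 0 p hpP (by rw [he]; exact hpP)
    have h2p : f 1 p ≠ p := fun he => hfresh 1 p hpP (by rw [he]; exact hpP)
    have h12 : f 0 p ≠ f 1 p := fun he => by
      have := (hinj 0 1 p hpP p hpP he).1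
      exact absurd this (by decide)
    obtain ⟨h1R, h1V⟩ := hA p (List.mem_cons_self) 0
    obtain ⟨h2R, h2V⟩ := hA p (List.mem_cons_self) 1
    have h1W : f 0 p ∉ A.W := fun hx => h1R (A.sub hx)
    have h2W : f 1 p ∉ A.W := fun hx => h2R (A.sub hx)
    have hcopyL : ∀ i : Fin 6, f i p ∉ {x : PVar | x ∈ L} :=
      fun i hx => hfresh i p hpP (hLP _ hx)
    have hconsSet : {x : PVar | x ∈ (p::L)} = {x | x ∈ L} ∪ {p} := by
      ext x; simp [List.mem_cons, or_comm]
    have hVL : A.V ∩ {x | x ∈ (p :: L)} = (A.V ∩ {x | x ∈ L}) ∪ ({p} ∩ A.V) :=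
      inter_cons p L A.V
    rw [List.map_cons, interp_seqL_cons]
    constructor
    · rintro ⟨C, hstep, hrest⟩
      rw [splitP1_iff f p A C h1R h1V h2R h2V h1p h2p h12] at hstep
      obtain ⟨hVc, hRWc⟩ := hstep
      have hCRW : (C.R ⊆ A.R ∪ {f 0 p} ∪ {f 1 p}) ∧ A.R ⊆ C.R ∧
          (C.W ⊆ A.W ∪ {f 0 p} ∪ {f 1 p}) ∧ A.W ⊆ C.W := by
        rcases hRWc with ⟨_, hr, hw⟩ | ⟨_, hr, hw⟩ | ⟨_, hr, hw⟩ | ⟨_, _, hr, hw⟩ |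
          ⟨_, _, hr, hw⟩ | ⟨_, _, hr, hw⟩ <;> rw [hr, hw] <;>
          refine ⟨?_, ?_, ?_, ?_⟩ <;> intro x hx <;>
          (try simp only [Set.mem_union] at hx) <;> (try simp only [Set.mem_union]) <;> tauto
      have hCV : (C.V ⊆ A.V ∪ {f 0 p} ∪ {f 1 p}) ∧ A.V ⊆ C.V := by
        rcases hVc with ⟨_, hv⟩ | ⟨_, hv⟩ <;> rw [hv] <;> constructor <;> intro x hx <;>
          (try simp only [Set.mem_union] at hx) <;> (try simp only [Set.mem_union]) <;> tauto
      have hAC : ∀ q ∈ L, ∀ i : Fin 6, f i q ∉ C.R ∧ f i q ∉ C.V := by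
        intro q hq i
        have hqP := hLP q hq
        have hne0 : f i q ≠ f 0 p := fun he => hpL (((hinj i 0 q hqP p hpP he).2) ▸ hq)
        have hne1 : f i q ≠ f 1 p := fun he => hpL (((hinj i 1 q hqP p hpP he).2) ▸ hq)
        obtain ⟨haR, haV⟩ := hA q (List.mem_cons_of_mem _ hq) i
        constructor
        · intro hx
          have := hCRW.1 hx
          simp only [Set.mem_union, Set.mem_singleton_iff] at this
          tauto
        · intro hx
          have := hCV.1 hx
          simp only [Set.mem_union, Set.mem_singleton_iff] at this
          tauto
      rw [ih hndL hLP C B hAC] at hrest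
      obtain ⟨R1, W1, R2, W2, hw1, hw2, hR1L, hR2L, hRu, hWu, hd1, hd2, hBR, hBW, hBV⟩ := hrest
      have hCRL : C.R ∩ {x | x ∈ L} = A.R ∩ {x | x ∈ L} := by
        ext x
        simp only [Set.mem_inter_iff, Set.mem_setOf_eq]
        constructor
        · rintro ⟨hx, hl⟩
          refine ⟨?_, hl⟩
          have := hCRW.1 hx
          simp only [Set.mem_union, Set.mem_singleton_iff] at this
          rcases this with (h | rfl) | rfl
          · exact h
          · exact absurd hl (hcopyL 0)
          · exact absurd hl (hcopyL 1)
        · rintro ⟨hx, hl⟩; exact ⟨hCRW.2.1 hx, hl⟩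
      have hCWL : C.W ∩ {x | x ∈ L} = A.W ∩ {x | x ∈ L} := by
        ext x
        simp only [Set.mem_inter_iff, Set.mem_setOf_eq]
        constructor
        · rintro ⟨hx, hl⟩
          refine ⟨?_, hl⟩
          have := hCRW.2.2.1 hx
          simp only [Set.mem_union, Set.mem_singleton_iff] at this
          rcases this with (h | rfl) | rfl
          · exact h
          · exact absurd hl (hcopyL 0)
          · exact absurd hl (hcopyL 1)
        · rintro ⟨hx, hl⟩; exact ⟨hCRW.2.2.2 hx, hl⟩
      have hCVL : C.V ∩ {x | x ∈ L} = A.V ∩ {x | x ∈ L} := by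
        ext x
        simp only [Set.mem_inter_iff, Set.mem_setOf_eq]
        constructor
        · rintro ⟨hx, hl⟩
          refine ⟨?_, hl⟩
          have := hCV.1 hx
          simp only [Set.mem_union, Set.mem_singleton_iff] at this
          rcases this with (h | rfl) | rfl
          · exact h
          · exact absurd hl (hcopyL 0)
          · exact absurd hl (hcopyL 1)
        · rintro ⟨hx, hl⟩; exact ⟨hCV.2 hx, hl⟩
      have hru := hRu.trans hCRL
      have hwu := hWu.trans hCWL
      have hpR1 : p ∉ R1 := fun h => hpL (hR1L h)
      have hpR2 : p ∉ R2 := fun h => hpL (hR2L h)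
      have hpW1 : p ∉ W1 := fun h => hpR1 (hw1 h)
      have hpW2 : p ∉ W2 := fun h => hpR2 (hw2 h)
      have hBV' : B.V = A.V ∪ f 0 '' (A.V ∩ {x | x ∈ (p::L)}) ∪
          f 1 '' (A.V ∩ {x | x ∈ (p::L)}) := by
        rw [hVL, Set.image_union, Set.image_union]
        rcases hVc with ⟨hpv, hcv⟩ | ⟨hpv, hcv⟩
        · have hsing : ({p} : Set PVar) ∩ A.V = {p} :=
            Set.inter_eq_left.mpr (Set.singleton_subset_iff.mpr hpv)
          rw [hsing, Set.image_singleton, Set.image_singleton, hBV, hCVL, hcv]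
          ext x; simp only [Set.mem_union, Set.mem_singleton_iff]; tauto
        · have hsing : ({p} : Set PVar) ∩ A.V = ∅ := by
            rw [Set.singleton_inter_eq_empty]; exact hpv
          rw [hsing, Set.image_empty, Set.image_empty, hBV, hCVL, hcv]
          ext x; simp only [Set.mem_union, Set.mem_empty_iff_false]; tauto
      rcases hRWc with ⟨hpR, hcr, hcw⟩ | ⟨hpW, hcr, hcw⟩ | ⟨hpW, hcr, hcw⟩ |
        ⟨hpR, hpW, hcr, hcw⟩ | ⟨hpR, hpW, hcr, hcw⟩ | ⟨hpR, hpW, hcr, hcw⟩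
      · -- p unreadable : keep sets
        have hpW' : p ∉ A.W := fun h => hpR (A.sub h)
        refine ⟨R1, W1, R2, W2, hw1, hw2,
          hR1L.trans (by rw [hconsSet]; exact Set.subset_union_left),
          hR2L.trans (by rw [hconsSet]; exact Set.subset_union_left), ?_, ?_, hd1, hd2,
          ?_, ?_, hBV'⟩
        · rw [hconsSet, Set.inter_union_distrib_left,
            Set.inter_singleton_eq_empty.mpr hpR, Set.union_empty]
          exact hru
        · rw [hconsSet, Set.inter_union_distrib_left,
            Set.inter_singleton_eq_empty.mpr hpW', Set.union_empty]
          exact hwu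
        · rw [hBR, hcr]
        · rw [hBW, hcw]
      · -- p writable, copy 1
        have hpR' : p ∈ A.R := A.sub hpW
        refine ⟨R1 ∪ {p}, W1 ∪ {p}, R2, W2,
          Set.union_subset_union hw1 (subset_refl _), hw2, ?_, ?_, ?_, ?_, ?_, ?_, ?_, ?_, hBV'⟩
        · rw [hconsSet]; exact Set.union_subset_union hR1L (subset_refl _)
        · rw [hconsSet]; exact hR2L.trans Set.subset_union_left
        · rw [hconsSet, Set.inter_union_distrib_left,
            Set.inter_eq_right.mpr (Set.singleton_subset_iff.mpr hpR'), ← hru]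
          ext x; simp only [Set.mem_union]; tauto
        · rw [hconsSet, Set.inter_union_distrib_left,
            Set.inter_eq_right.mpr (Set.singleton_subset_iff.mpr hpW), ← hwu]
          ext x; simp only [Set.mem_union]; tauto
        · rw [Set.union_inter_distrib_right, hd1,
            Set.singleton_inter_eq_empty.mpr hpR2, Set.union_empty]
        · rw [Set.inter_union_distrib_left, hd2,
            Set.inter_singleton_eq_empty.mpr hpW2, Set.union_empty]
        · rw [hBR, hcr, Set.image_union, Set.image_singleton]
          ext x; simp only [Set.mem_union]; tauto
        · rw [hBW, hcw, Set.image_union, Set.image_singleton]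
          ext x; simp only [Set.mem_union]; tauto
      · -- p writable, copy 2
        have hpR' : p ∈ A.R := A.sub hpW
        refine ⟨R1, W1, R2 ∪ {p}, W2 ∪ {p}, hw1,
          Set.union_subset_union hw2 (subset_refl _), ?_, ?_, ?_, ?_, ?_, ?_, ?_, ?_, hBV'⟩
        · rw [hconsSet]; exact hR1L.trans Set.subset_union_left
        · rw [hconsSet]; exact Set.union_subset_union hR2L (subset_refl _)
        · rw [hconsSet, Set.inter_union_distrib_left,
            Set.inter_eq_right.mpr (Set.singleton_subset_iff.mpr hpR'), ← hru]
          ext x; simp only [Set.mem_union]; tauto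
        · rw [hconsSet, Set.inter_union_distrib_left,
            Set.inter_eq_right.mpr (Set.singleton_subset_iff.mpr hpW), ← hwu]
          ext x; simp only [Set.mem_union]; tauto
        · rw [Set.inter_union_distrib_left, hd1,
            Set.inter_singleton_eq_empty.mpr hpW1, Set.union_empty]
        · rw [Set.union_inter_distrib_right, hd2,
            Set.singleton_inter_eq_empty.mpr hpR1, Set.union_empty]
        · rw [hBR, hcr, Set.image_union, Set.image_singleton]
          ext x; simp only [Set.mem_union]; tauto
        · rw [hBW, hcw, Set.image_union, Set.image_singleton]
          ext x; simp only [Set.mem_union]; tauto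
      · -- p readable not writable, copy 1
        refine ⟨R1 ∪ {p}, W1, R2, W2, hw1.trans Set.subset_union_left, hw2,
          ?_, ?_, ?_, ?_, hd1, ?_, ?_, ?_, hBV'⟩
        · rw [hconsSet]; exact Set.union_subset_union hR1L (subset_refl _)
        · rw [hconsSet]; exact hR2L.trans Set.subset_union_left
        · rw [hconsSet, Set.inter_union_distrib_left,
            Set.inter_eq_right.mpr (Set.singleton_subset_iff.mpr hpR), ← hru]
          ext x; simp only [Set.mem_union]; tauto
        · rw [hconsSet, Set.inter_union_distrib_left,
            Set.inter_singleton_eq_empty.mpr hpW, Set.union_empty]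
          exact hwu
        · rw [Set.inter_union_distrib_left, hd2,
            Set.inter_singleton_eq_empty.mpr hpW2, Set.union_empty]
        · rw [hBR, hcr, Set.image_union, Set.image_singleton]
          ext x; simp only [Set.mem_union]; tauto
        · rw [hBW, hcw]
      · -- p readable not writable, copy 2
        refine ⟨R1, W1, R2 ∪ {p}, W2, hw1, hw2.trans Set.subset_union_left,
          ?_, ?_, ?_, ?_, ?_, hd2, ?_, ?_, hBV'⟩
        · rw [hconsSet]; exact hR1L.trans Set.subset_union_left
        · rw [hconsSet]; exact Set.union_subset_union hR2L (subset_refl _)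
        · rw [hconsSet, Set.inter_union_distrib_left,
            Set.inter_eq_right.mpr (Set.singleton_subset_iff.mpr hpR), ← hru]
          ext x; simp only [Set.mem_union]; tauto
        · rw [hconsSet, Set.inter_union_distrib_left,
            Set.inter_singleton_eq_empty.mpr hpW, Set.union_empty]
          exact hwu
        · rw [Set.inter_union_distrib_left, hd1,
            Set.inter_singleton_eq_empty.mpr hpW1, Set.union_empty]
        · rw [hBR, hcr, Set.image_union, Set.image_singleton]
          ext x; simp only [Set.mem_union]; tauto
        · rw [hBW, hcw]
      · -- p readable not writable, both copies
        refine ⟨R1 ∪ {p}, W1, R2 ∪ {p}, W2, hw1.trans Set.subset_union_left,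
          hw2.trans Set.subset_union_left, ?_, ?_, ?_, ?_, ?_, ?_, ?_, ?_, hBV'⟩
        · rw [hconsSet]; exact Set.union_subset_union hR1L (subset_refl _)
        · rw [hconsSet]; exact Set.union_subset_union hR2L (subset_refl _)
        · rw [hconsSet, Set.inter_union_distrib_left,
            Set.inter_eq_right.mpr (Set.singleton_subset_iff.mpr hpR), ← hru]
          ext x; simp only [Set.mem_union]; tauto
        · rw [hconsSet, Set.inter_union_distrib_left,
            Set.inter_singleton_eq_empty.mpr hpW, Set.union_empty]
          exact hwu
        · rw [Set.inter_union_distrib_left, hd1,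
            Set.inter_singleton_eq_empty.mpr hpW1, Set.union_empty]
        · rw [Set.inter_union_distrib_left, hd2,
            Set.inter_singleton_eq_empty.mpr hpW2, Set.union_empty]
        · rw [hBR, hcr, Set.image_union, Set.image_union, Set.image_singleton, Set.image_singleton]
          ext x; simp only [Set.mem_union]; tauto
        · rw [hBW, hcw]
    · rintro ⟨R1, W1, R2, W2, hw1, hw2, hR1L, hR2L, hRu, hWu, hd1, hd2, hBR, hBW, hBV⟩
      have hpAR : p ∈ A.R ↔ (p ∈ R1 ∨ p ∈ R2) := by
        constructor
        · intro h
          have hm : p ∈ R1 ∪ R2 := by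
            rw [hRu]; exact ⟨h, by simp⟩
          exact hm
        · intro h
          have hm : p ∈ R1 ∪ R2 := h
          rw [hRu] at hm; exact hm.1
      have hpAW : p ∈ A.W ↔ (p ∈ W1 ∨ p ∈ W2) := by
        constructor
        · intro h
          have hm : p ∈ W1 ∪ W2 := by
            rw [hWu]; exact ⟨h, by simp⟩
          exact hm
        · intro h
          have hm : p ∈ W1 ∪ W2 := h
          rw [hWu] at hm; exact hm.1
      set CV : Set PVar := A.V ∪ ({f 0 p} ∪ {f 1 p}) ∩ {_x : PVar | p ∈ A.V} with hCVdef
      have hCVub : CV ⊆ A.V ∪ {f 0 p} ∪ {f 1 p} := by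
        intro x hx
        rcases hx with h | ⟨h, -⟩
        · exact Or.inl (Or.inl h)
        · rcases h with h | h
          · exact Or.inl (Or.inr h)
          · exact Or.inr h
      have hCVlb : A.V ⊆ CV := Set.subset_union_left
      have hVpart : (p ∈ A.V ∧ CV = A.V ∪ {f 0 p} ∪ {f 1 p}) ∨ (p ∉ A.V ∧ CV = A.V) := by
        by_cases hpV : p ∈ A.V
        · refine Or.inl ⟨hpV, ?_⟩
          rw [hCVdef]; ext x
          simp only [Set.mem_union, Set.mem_inter_iff, Set.mem_singleton_iff,
            Set.mem_setOf_eq]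
          tauto
        · refine Or.inr ⟨hpV, ?_⟩
          rw [hCVdef]; ext x
          simp only [Set.mem_union, Set.mem_inter_iff, Set.mem_singleton_iff,
            Set.mem_setOf_eq]
          tauto
      have hCVL : CV ∩ {x | x ∈ L} = A.V ∩ {x | x ∈ L} := by
        ext x
        simp only [Set.mem_inter_iff, Set.mem_setOf_eq]
        constructor
        · rintro ⟨hx, hl⟩
          refine ⟨?_, hl⟩
          have hb := hCVub hx
          simp only [Set.mem_union, Set.mem_singleton_iff] at hb
          rcases hb with (h | rfl) | rfl
          · exact h
          · exact absurd hl (hcopyL 0)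
          · exact absurd hl (hcopyL 1)
        · rintro ⟨hx, hl⟩; exact ⟨hCVlb hx, hl⟩
      have hBVC : B.V = CV ∪ f 0 '' (CV ∩ {x | x ∈ L}) ∪ f 1 '' (CV ∩ {x | x ∈ L}) := by
        rw [hCVL, hBV, hVL, Set.image_union, Set.image_union]
        rcases hVpart with ⟨hpv, hcv⟩ | ⟨hpv, hcv⟩
        · have hsing : ({p} : Set PVar) ∩ A.V = {p} :=
            Set.inter_eq_left.mpr (Set.singleton_subset_iff.mpr hpv)
          rw [hsing, Set.image_singleton, Set.image_singleton, hcv]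
          ext x; simp only [Set.mem_union, Set.mem_singleton_iff]; tauto
        · have hsing : ({p} : Set PVar) ∩ A.V = ∅ := by
            rw [Set.singleton_inter_eq_empty]; exact hpv
          rw [hsing, Set.image_empty, Set.image_empty, hcv]
          ext x; simp only [Set.mem_union, Set.mem_empty_iff_false]; tauto
      have hALp : ∀ s : Set PVar, (s ∩ {x | x ∈ (p::L)}) \ {p} = s ∩ {x | x ∈ L} := by
        intro s; ext x
        simp only [Set.mem_diff, Set.mem_inter_iff, Set.mem_setOf_eq, List.mem_cons,
          Set.mem_singleton_iff]
        constructor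
        · rintro ⟨⟨hx, (rfl | hl)⟩, hne⟩
          · exact absurd rfl hne
          · exact ⟨hx, hl⟩
        · rintro ⟨hx, hl⟩
          exact ⟨⟨hx, Or.inr hl⟩, fun he => hpL (he ▸ hl)⟩
      have hRu' : (R1 \ {p}) ∪ (R2 \ {p}) = A.R ∩ {x | x ∈ L} := by
        rw [← Set.union_diff_distrib, hRu, hALp]
      have hWu' : (W1 \ {p}) ∪ (W2 \ {p}) = A.W ∩ {x | x ∈ L} := by
        rw [← Set.union_diff_distrib, hWu, hALp]
      have hsubL : ∀ {S : Set PVar}, S ⊆ {x | x ∈ (p::L)} → S \ {p} ⊆ {x | x ∈ L} := by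
        intro S hS x hx
        have hb := hS hx.1
        simp only [Set.mem_setOf_eq, List.mem_cons] at hb ⊢
        rcases hb with rfl | h
        · exact absurd rfl hx.2
        · exact h
      have hd1' : (W1 \ {p}) ∩ (R2 \ {p}) = ∅ := by
        apply Set.eq_empty_of_subset_empty
        intro x hx
        rw [← hd1]; exact ⟨hx.1.1, hx.2.1⟩
      have hd2' : (W2 \ {p}) ∩ (R1 \ {p}) = ∅ := by
        apply Set.eq_empty_of_subset_empty
        intro x hx
        rw [← hd2]; exact ⟨hx.1.1, hx.2.1⟩
      have hsubW1R1 : W1 \ {p} ⊆ R1 \ {p} := fun x hx => ⟨hw1 hx.1, hx.2⟩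
      have hsubW2R2 : W2 \ {p} ⊆ R2 \ {p} := fun x hx => ⟨hw2 hx.1, hx.2⟩
      have himgmem : ∀ (S : Set PVar) (i : Fin 6), p ∈ S →
          f i '' S = f i '' (S \ {p}) ∪ {f i p} := by
        intro S i hp
        ext x
        simp only [Set.mem_image, Set.mem_union, Set.mem_diff, Set.mem_singleton_iff]
        constructor
        · rintro ⟨y, hy, rfl⟩
          by_cases hyp : y = p
          · subst hyp; exact Or.inr rfl
          · exact Or.inl ⟨y, ⟨hy, hyp⟩, rfl⟩
        · rintro (⟨y, ⟨hy, -⟩, rfl⟩ | rfl)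
          · exact ⟨y, hy, rfl⟩
          · exact ⟨p, hp, rfl⟩
      have himgnot : ∀ (S : Set PVar) (i : Fin 6), p ∉ S →
          f i '' (S \ {p}) = f i '' S := by
        intro S i hp; rw [Set.diff_singleton_eq_self hp]
      have hACgen : ∀ (C : Model), C.R ⊆ A.R ∪ {f 0 p} ∪ {f 1 p} →
          C.V ⊆ A.V ∪ {f 0 p} ∪ {f 1 p} →
          ∀ q ∈ L, ∀ i : Fin 6, f i q ∉ C.R ∧ f i q ∉ C.V := by
        intro C hCR hCVs q hq i
        have hqP := hLP q hq
        have hne0 : f i q ≠ f 0 p := fun he => hpL (((hinj i 0 q hqP p hpP he).2) ▸ hq)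
        have hne1 : f i q ≠ f 1 p := fun he => hpL (((hinj i 1 q hqP p hpP he).2) ▸ hq)
        obtain ⟨haR, haV⟩ := hA q (List.mem_cons_of_mem _ hq) i
        constructor
        · intro hx
          have hb := hCR hx
          simp only [Set.mem_union, Set.mem_singleton_iff] at hb
          tauto
        · intro hx
          have hb := hCVs hx
          simp only [Set.mem_union, Set.mem_singleton_iff] at hb
          tauto
      by_cases hpW1c : p ∈ W1
      · -- writable, copy 1
        have hpAWc : p ∈ A.W := hpAW.mpr (Or.inl hpW1c)
        have hpR1c : p ∈ R1 := hw1 hpW1c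
        have hpR2c : p ∉ R2 := fun h => by
          have hm : p ∈ W1 ∩ R2 := ⟨hpW1c, h⟩
          rw [hd1] at hm; exact hm
        have hpW2c : p ∉ W2 := fun h => hpR2c (hw2 h)
        refine ⟨⟨A.R ∪ {f 0 p}, A.W ∪ {f 0 p}, CV,
          Set.union_subset_union A.sub (subset_refl _)⟩, ?_, ?_⟩
        · exact (splitP1_iff f p A _ h1R h1V h2R h2V h1p h2p h12).mpr
            ⟨hVpart, Or.inr (Or.inl ⟨hpAWc, rfl, rfl⟩)⟩
        · rw [ih hndL hLP _ B (hACgen _ Set.subset_union_left hCVub)]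
          refine ⟨R1 \ {p}, W1 \ {p}, R2 \ {p}, W2 \ {p}, hsubW1R1, hsubW2R2,
            hsubL hR1L, hsubL hR2L, ?_, ?_, hd1', hd2', ?_, ?_, hBVC⟩
          · show (R1 \ {p}) ∪ (R2 \ {p}) = (A.R ∪ {f 0 p}) ∩ {x | x ∈ L}
            rw [union_singleton_inter_list L (hcopyL 0)]; exact hRu'
          · show (W1 \ {p}) ∪ (W2 \ {p}) = (A.W ∪ {f 0 p}) ∩ {x | x ∈ L}
            rw [union_singleton_inter_list L (hcopyL 0)]; exact hWu'
          · show B.R = (A.R ∪ {f 0 p}) ∪ f 0 '' (R1 \ {p}) ∪ f 1 '' (R2 \ {p})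
            rw [hBR, himgmem R1 0 hpR1c, himgnot R2 1 hpR2c]
            ext x; simp only [Set.mem_union]; tauto
          · show B.W = (A.W ∪ {f 0 p}) ∪ f 0 '' (W1 \ {p}) ∪ f 1 '' (W2 \ {p})
            rw [hBW, himgmem W1 0 hpW1c, himgnot W2 1 hpW2c]
            ext x; simp only [Set.mem_union]; tauto
      · by_cases hpW2c : p ∈ W2
        · -- writable, copy 2
          have hpAWc : p ∈ A.W := hpAW.mpr (Or.inr hpW2c)
          have hpR2c : p ∈ R2 := hw2 hpW2c
          have hpR1c : p ∉ R1 := fun h => by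
            have hm : p ∈ W2 ∩ R1 := ⟨hpW2c, h⟩
            rw [hd2] at hm; exact hm
          refine ⟨⟨A.R ∪ {f 1 p}, A.W ∪ {f 1 p}, CV,
            Set.union_subset_union A.sub (subset_refl _)⟩, ?_, ?_⟩
          · exact (splitP1_iff f p A _ h1R h1V h2R h2V h1p h2p h12).mpr
              ⟨hVpart, Or.inr (Or.inr (Or.inl ⟨hpAWc, rfl, rfl⟩))⟩
          · rw [ih hndL hLP _ B (hACgen _
              (Set.union_subset_union Set.subset_union_left (subset_refl _)) hCVub)]
            refine ⟨R1 \ {p}, W1 \ {p}, R2 \ {p}, W2 \ {p}, hsubW1R1, hsubW2R2,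
              hsubL hR1L, hsubL hR2L, ?_, ?_, hd1', hd2', ?_, ?_, hBVC⟩
            · show (R1 \ {p}) ∪ (R2 \ {p}) = (A.R ∪ {f 1 p}) ∩ {x | x ∈ L}
              rw [union_singleton_inter_list L (hcopyL 1)]; exact hRu'
            · show (W1 \ {p}) ∪ (W2 \ {p}) = (A.W ∪ {f 1 p}) ∩ {x | x ∈ L}
              rw [union_singleton_inter_list L (hcopyL 1)]; exact hWu'
            · show B.R = (A.R ∪ {f 1 p}) ∪ f 0 '' (R1 \ {p}) ∪ f 1 '' (R2 \ {p})
              rw [hBR, himgmem R2 1 hpR2c, himgnot R1 0 hpR1c]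
              ext x; simp only [Set.mem_union]; tauto
            · show B.W = (A.W ∪ {f 1 p}) ∪ f 0 '' (W1 \ {p}) ∪ f 1 '' (W2 \ {p})
              rw [hBW, himgmem W2 1 hpW2c, himgnot W1 0 hpW1c]
              ext x; simp only [Set.mem_union]; tauto
        · -- not writable
          have hpAWc : p ∉ A.W := fun h => by
            rcases hpAW.mp h with h1 | h2
            · exact hpW1c h1
            · exact hpW2c h2
          by_cases hpR1c : p ∈ R1
          · by_cases hpR2c : p ∈ R2
            · -- readable, both copies
              have hpARc : p ∈ A.R := hpAR.mpr (Or.inl hpR1c)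
              refine ⟨⟨A.R ∪ {f 0 p} ∪ {f 1 p}, A.W, CV,
                A.sub.trans (Set.subset_union_left.trans Set.subset_union_left)⟩, ?_, ?_⟩
              · exact (splitP1_iff f p A _ h1R h1V h2R h2V h1p h2p h12).mpr
                  ⟨hVpart, Or.inr (Or.inr (Or.inr (Or.inr (Or.inr
                    ⟨hpARc, hpAWc, rfl, rfl⟩))))⟩
              · rw [ih hndL hLP _ B (hACgen _ (subset_refl _) hCVub)]
                refine ⟨R1 \ {p}, W1 \ {p}, R2 \ {p}, W2 \ {p}, hsubW1R1, hsubW2R2,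
                  hsubL hR1L, hsubL hR2L, ?_, ?_, hd1', hd2', ?_, ?_, hBVC⟩
                · show (R1 \ {p}) ∪ (R2 \ {p}) = (A.R ∪ {f 0 p} ∪ {f 1 p}) ∩ {x | x ∈ L}
                  rw [union_singleton_inter_list L (hcopyL 1),
                    union_singleton_inter_list L (hcopyL 0)]
                  exact hRu'
                · show (W1 \ {p}) ∪ (W2 \ {p}) = A.W ∩ {x | x ∈ L}
                  exact hWu'
                · show B.R = (A.R ∪ {f 0 p} ∪ {f 1 p}) ∪ f 0 '' (R1 \ {p}) ∪ f 1 '' (R2 \ {p})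
                  rw [hBR, himgmem R1 0 hpR1c, himgmem R2 1 hpR2c]
                  ext x; simp only [Set.mem_union]; tauto
                · show B.W = A.W ∪ f 0 '' (W1 \ {p}) ∪ f 1 '' (W2 \ {p})
                  rw [himgnot W1 0 hpW1c, himgnot W2 1 hpW2c]; exact hBW
            · -- readable, copy 1
              have hpARc : p ∈ A.R := hpAR.mpr (Or.inl hpR1c)
              refine ⟨⟨A.R ∪ {f 0 p}, A.W, CV,
                A.sub.trans Set.subset_union_left⟩, ?_, ?_⟩
              · exact (splitP1_iff f p A _ h1R h1V h2R h2V h1p h2p h12).mpr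
                  ⟨hVpart, Or.inr (Or.inr (Or.inr (Or.inl ⟨hpARc, hpAWc, rfl, rfl⟩)))⟩
              · rw [ih hndL hLP _ B (hACgen _ Set.subset_union_left hCVub)]
                refine ⟨R1 \ {p}, W1 \ {p}, R2 \ {p}, W2 \ {p}, hsubW1R1, hsubW2R2,
                  hsubL hR1L, hsubL hR2L, ?_, ?_, hd1', hd2', ?_, ?_, hBVC⟩
                · show (R1 \ {p}) ∪ (R2 \ {p}) = (A.R ∪ {f 0 p}) ∩ {x | x ∈ L}
                  rw [union_singleton_inter_list L (hcopyL 0)]; exact hRu'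
                · show (W1 \ {p}) ∪ (W2 \ {p}) = A.W ∩ {x | x ∈ L}
                  exact hWu'
                · show B.R = (A.R ∪ {f 0 p}) ∪ f 0 '' (R1 \ {p}) ∪ f 1 '' (R2 \ {p})
                  rw [hBR, himgmem R1 0 hpR1c, himgnot R2 1 hpR2c]
                  ext x; simp only [Set.mem_union]; tauto
                · show B.W = A.W ∪ f 0 '' (W1 \ {p}) ∪ f 1 '' (W2 \ {p})
                  rw [himgnot W1 0 hpW1c, himgnot W2 1 hpW2c]; exact hBW
          · by_cases hpR2c : p ∈ R2
            · -- readable, copy 2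
              have hpARc : p ∈ A.R := hpAR.mpr (Or.inr hpR2c)
              refine ⟨⟨A.R ∪ {f 1 p}, A.W, CV,
                A.sub.trans Set.subset_union_left⟩, ?_, ?_⟩
              · exact (splitP1_iff f p A _ h1R h1V h2R h2V h1p h2p h12).mpr
                  ⟨hVpart, Or.inr (Or.inr (Or.inr (Or.inr (Or.inl
                    ⟨hpARc, hpAWc, rfl, rfl⟩))))⟩
              · rw [ih hndL hLP _ B (hACgen _ (Set.union_subset_union
                  Set.subset_union_left (subset_refl _)) hCVub)]
                refine ⟨R1 \ {p}, W1 \ {p}, R2 \ {p}, W2 \ {p}, hsubW1R1, hsubW2R2,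
                  hsubL hR1L, hsubL hR2L, ?_, ?_, hd1', hd2', ?_, ?_, hBVC⟩
                · show (R1 \ {p}) ∪ (R2 \ {p}) = (A.R ∪ {f 1 p}) ∩ {x | x ∈ L}
                  rw [union_singleton_inter_list L (hcopyL 1)]; exact hRu'
                · show (W1 \ {p}) ∪ (W2 \ {p}) = A.W ∩ {x | x ∈ L}
                  exact hWu'
                · show B.R = (A.R ∪ {f 1 p}) ∪ f 0 '' (R1 \ {p}) ∪ f 1 '' (R2 \ {p})
                  rw [hBR, himgmem R2 1 hpR2c, himgnot R1 0 hpR1c]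
                  ext x; simp only [Set.mem_union]; tauto
                · show B.W = A.W ∪ f 0 '' (W1 \ {p}) ∪ f 1 '' (W2 \ {p})
                  rw [himgnot W1 0 hpW1c, himgnot W2 1 hpW2c]; exact hBW
            · -- not readable
              have hpARc : p ∉ A.R := fun h => by
                rcases hpAR.mp h with h1 | h2
                · exact hpR1c h1
                · exact hpR2c h2
              refine ⟨⟨A.R, A.W, CV, A.sub⟩, ?_, ?_⟩
              · exact (splitP1_iff f p A _ h1R h1V h2R h2V h1p h2p h12).mpr
                  ⟨hVpart, Or.inl ⟨hpARc, rfl, rfl⟩⟩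
              · rw [ih hndL hLP ⟨A.R, A.W, CV, A.sub⟩ B (hACgen ⟨A.R, A.W, CV, A.sub⟩
                  (Set.subset_union_left.trans Set.subset_union_left) hCVub)]
                refine ⟨R1 \ {p}, W1 \ {p}, R2 \ {p}, W2 \ {p}, hsubW1R1, hsubW2R2,
                  hsubL hR1L, hsubL hR2L, ?_, ?_, hd1', hd2', ?_, ?_, hBVC⟩
                · show (R1 \ {p}) ∪ (R2 \ {p}) = A.R ∩ {x | x ∈ L}
                  exact hRu'
                · show (W1 \ {p}) ∪ (W2 \ {p}) = A.W ∩ {x | x ∈ L}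
                  exact hWu'
                · show B.R = A.R ∪ f 0 '' (R1 \ {p}) ∪ f 1 '' (R2 \ {p})
                  rw [himgnot R1 0 hpR1c, himgnot R2 1 hpR2c]; exact hBR
                · show B.W = A.W ∪ f 0 '' (W1 \ {p}) ∪ f 1 '' (W2 \ {p})
                  rw [himgnot W1 0 hpW1c, himgnot W2 1 hpW2c]; exact hBW
set_option maxHeartbeats 2000000 in
/-- Correctness of the split program (Lemma 3): for models `M`,
`M₁`, `M₂` whose components are subsets of `P`, `M ◁ (M₁,M₂)` iff
`M⟦split(P)⟧M'` where `M' = ⟨R ∪ R₁¹ ∪ R₂², W ∪ W₁¹ ∪ W₂², V ∪ V₁¹ ∪ V₂²⟩`.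
The copy variables are given by a scheme `f` pairwise distinct and fresh on
`P`. -/
theorem split_correct (P : Finset PVar) (f : Fin 6 → PVar → PVar)
    (hinj : ∀ i j : Fin 6, ∀ p ∈ P, ∀ q ∈ P, f i p = f j q → i = j ∧ p = q)
    (hfresh : ∀ i : Fin 6, ∀ p ∈ P, f i p ∉ P)
    (M M1 M2 : Model)
    (hM : interModel M ↑P = M) (hM1 : interModel M1 ↑P = M1)
    (hM2 : interModel M2 ↑P = M2) :
    SplitRel M M1 M2 ↔
      Interp (splitProg f P) M (extModel M (f 0) (f 1) M1 M2) := by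
  have hnd : (P.sort (· ≤ ·)).Nodup := P.sort_nodup _
  have hsubL : ∀ q ∈ P.sort (· ≤ ·), q ∈ P := fun q hq => (Finset.mem_sort _).mp hq
  have hsetL : {x : PVar | x ∈ P.sort (· ≤ ·)} = (↑P : Set PVar) := by
    ext x; simp [Finset.mem_sort]
  have hMR : M.R ∩ ↑P = M.R := congrArg Model.R hM
  have hMW : M.W ∩ ↑P = M.W := congrArg Model.W hM
  have hMV : M.V ∩ ↑P = M.V := congrArg Model.V hM
  have hM1R : M1.R ∩ ↑P = M1.R := congrArg Model.R hM1
  have hM1W : M1.W ∩ ↑P = M1.W := congrArg Model.W hM1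
  have hM1V : M1.V ∩ ↑P = M1.V := congrArg Model.V hM1
  have hM2R : M2.R ∩ ↑P = M2.R := congrArg Model.R hM2
  have hM2W : M2.W ∩ ↑P = M2.W := congrArg Model.W hM2
  have hM2V : M2.V ∩ ↑P = M2.V := congrArg Model.V hM2
  have hMRP : M.R ⊆ ↑P := by rw [← hMR]; exact Set.inter_subset_right
  have hMWP : M.W ⊆ ↑P := by rw [← hMW]; exact Set.inter_subset_right
  have hMVP : M.V ⊆ ↑P := by rw [← hMV]; exact Set.inter_subset_right
  have hM1RP : M1.R ⊆ ↑P := by rw [← hM1R]; exact Set.inter_subset_right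
  have hM1WP : M1.W ⊆ ↑P := by rw [← hM1W]; exact Set.inter_subset_right
  have hM1VP : M1.V ⊆ ↑P := by rw [← hM1V]; exact Set.inter_subset_right
  have hM2RP : M2.R ⊆ ↑P := by rw [← hM2R]; exact Set.inter_subset_right
  have hM2WP : M2.W ⊆ ↑P := by rw [← hM2W]; exact Set.inter_subset_right
  have hM2VP : M2.V ⊆ ↑P := by rw [← hM2V]; exact Set.inter_subset_right
  have hA : ∀ q ∈ P.sort (· ≤ ·), ∀ i : Fin 6, f i q ∉ M.R ∧ f i q ∉ M.V := by
    intro q hq i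
    have hqP := hsubL q hq
    have hni : f i q ∉ (↑P : Set PVar) := fun h => hfresh i q hqP h
    exact ⟨fun h => hni (hMRP h), fun h => hni (hMVP h)⟩
  have hprog : splitProg f P = seqL ((P.sort (· ≤ ·)).map (splitP1 f)) := rfl
  rw [hprog, splitL_iff f P hinj hfresh (P.sort (· ≤ ·)) hnd hsubL M _ hA, hsetL]
  constructor
  · rintro ⟨⟨hd1, hd2⟩, hR, hW, hV1, hV2⟩
    refine ⟨M1.R, M1.W, M2.R, M2.W, M1.sub, M2.sub, hM1RP, hM2RP, ?_, ?_, hd1, hd2,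
      ?_, ?_, ?_⟩
    · rw [hMR]; exact hR.symm
    · rw [hMW]; exact hW.symm
    · rfl
    · rfl
    · show M.V ∪ f 0 '' M1.V ∪ f 1 '' M2.V =
        M.V ∪ f 0 '' (M.V ∩ ↑P) ∪ f 1 '' (M.V ∩ ↑P)
      rw [hMV, ← hV1, ← hV2]
  · rintro ⟨R1, W1, R2, W2, hw1, hw2, hR1P, hR2P, hRu, hWu, hd1, hd2, hBR, hBW, hBV⟩
    have aux1 : ∀ X S1 T1 S2 T2 : Set PVar, X ⊆ ↑P → S1 ⊆ ↑P → T1 ⊆ ↑P → S2 ⊆ ↑P →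
        T2 ⊆ ↑P → X ∪ f 0 '' S1 ∪ f 1 '' S2 = X ∪ f 0 '' T1 ∪ f 1 '' T2 → S1 ⊆ T1 := by
      intro X S1 T1 S2 T2 hX hS1 hT1 hS2 hT2 h x hx
      have hxP : x ∈ P := hS1 hx
      have hm : f 0 x ∈ X ∪ f 0 '' T1 ∪ f 1 '' T2 := by
        rw [← h]; exact Or.inl (Or.inr ⟨x, hx, rfl⟩)
      rcases hm with (hm | hm) | hm
      · exact absurd (hX hm) (hfresh 0 x hxP)
      · obtain ⟨y, hy, he⟩ := hm
        have hyx := (hinj 0 0 y (hT1 hy) x hxP he).2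
        rw [← hyx]; exact hy
      · obtain ⟨y, hy, he⟩ := hm
        have h10 := (hinj 1 0 y (hT2 hy) x hxP he).1
        exact absurd h10 (by decide)
    have aux2 : ∀ X S1 T1 S2 T2 : Set PVar, X ⊆ ↑P → S1 ⊆ ↑P → T1 ⊆ ↑P → S2 ⊆ ↑P →
        T2 ⊆ ↑P → X ∪ f 0 '' S1 ∪ f 1 '' S2 = X ∪ f 0 '' T1 ∪ f 1 '' T2 → S2 ⊆ T2 := by
      intro X S1 T1 S2 T2 hX hS1 hT1 hS2 hT2 h x hx
      have hxP : x ∈ P := hS2 hx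
      have hm : f 1 x ∈ X ∪ f 0 '' T1 ∪ f 1 '' T2 := by
        rw [← h]; exact Or.inr ⟨x, hx, rfl⟩
      rcases hm with (hm | hm) | hm
      · exact absurd (hX hm) (hfresh 1 x hxP)
      · obtain ⟨y, hy, he⟩ := hm
        have h01 := (hinj 0 1 y (hT1 hy) x hxP he).1
        exact absurd h01 (by decide)
      · obtain ⟨y, hy, he⟩ := hm
        have hyx := (hinj 1 1 y (hT2 hy) x hxP he).2
        rw [← hyx]; exact hy
    have hcancel : ∀ X S1 T1 S2 T2 : Set PVar, X ⊆ ↑P → S1 ⊆ ↑P → T1 ⊆ ↑P →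
        S2 ⊆ ↑P → T2 ⊆ ↑P →
        X ∪ f 0 '' S1 ∪ f 1 '' S2 = X ∪ f 0 '' T1 ∪ f 1 '' T2 → S1 = T1 ∧ S2 = T2 := by
      intro X S1 T1 S2 T2 hX hS1 hT1 hS2 hT2 h
      exact ⟨subset_antisymm (aux1 X S1 T1 S2 T2 hX hS1 hT1 hS2 hT2 h)
          (aux1 X T1 S1 T2 S2 hX hT1 hS1 hT2 hS2 h.symm),
        subset_antisymm (aux2 X S1 T1 S2 T2 hX hS1 hT1 hS2 hT2 h)
          (aux2 X T1 S1 T2 S2 hX hT1 hS1 hT2 hS2 h.symm)⟩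
    have hBR' : M.R ∪ f 0 '' M1.R ∪ f 1 '' M2.R = M.R ∪ f 0 '' R1 ∪ f 1 '' R2 := hBR
    have hBW' : M.W ∪ f 0 '' M1.W ∪ f 1 '' M2.W = M.W ∪ f 0 '' W1 ∪ f 1 '' W2 := hBW
    have hBV' : M.V ∪ f 0 '' M1.V ∪ f 1 '' M2.V =
        M.V ∪ f 0 '' (M.V ∩ ↑P) ∪ f 1 '' (M.V ∩ ↑P) := hBV
    obtain ⟨hR1e, hR2e⟩ := hcancel M.R M1.R R1 M2.R R2 hMRP hM1RP hR1P hM2RP hR2P hBR'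
    obtain ⟨hW1e, hW2e⟩ := hcancel M.W M1.W W1 M2.W W2 hMWP hM1WP
      (fun x hx => hR1P (hw1 hx)) hM2WP (fun x hx => hR2P (hw2 hx)) hBW'
    obtain ⟨hV1e, hV2e⟩ := hcancel M.V M1.V (M.V ∩ ↑P) M2.V (M.V ∩ ↑P) hMVP hM1VP
      Set.inter_subset_right hM2VP Set.inter_subset_right hBV'
    refine ⟨⟨?_, ?_⟩, ?_, ?_, ?_, ?_⟩
    · rw [hW1e, hR2e]; exact hd1
    · rw [hW2e, hR1e]; exact hd2
    · rw [hR1e, hR2e, hRu, hMR]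
    · rw [hW1e, hW2e, hWu, hMW]
    · rw [hV1e, hMV]
    · rw [hV2e, hMV]
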